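/- Let $C$ be a simple associative conformal algebra and $a \in C$ an element with $a \oo{0}(a \oo{0} C) = a \oo{0} C \neq 0$. Then $\{C \oo{0} a\} \oo{\omega} (a \oo{0} C) = C$, where $X \oo{\omega} Y = \sum_{n \geq 0} X \oo{n} Y$ and $\{C \oo{0} a\} = \{x \oo{0} a\} : x \in C\}$ (span). -/

import Mathlib

/-!
By sesquilinearity and right associativity, `{x ⟨0⟩ a} ⟨n⟩ w = x ⟨n⟩ (a ⟨0⟩ w)`: the curly
product absorbs the factor `a` into the right-hand argument. Since `a ⟨0⟩ (a ⟨0⟩ C) = a ⟨0⟩ C`,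
the span in question is therefore `C ⟨ω⟩ R` for the right ideal `R = a ⟨0⟩ C`, and `C ⟨ω⟩ R` is a
two-sided ideal for every right ideal `R`. It contains `a ⟨0⟩ (a ⟨0⟩ C) = R ≠ 0`, so by simplicity
it is all of `C`.
-/

open Finset

/-- The curly products `{x ⟨n⟩ y} = ∑ₛ (-1)^{n+s} (Dˢ/s!) (x ⟨n+s⟩ y)`
(a finite sum whenever the products are local, expressed via `finsum`). -/
noncomputable def curlyFn {k : Type*} [Field k]
    {C : Type*} [AddCommGroup C] [Module k C]
    (Dop : C →ₗ[k] C) (mul : ℕ → C →ₗ[k] C →ₗ[k] C)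
    (n : ℕ) (x y : C) : C :=
  ∑ᶠ s : ℕ, ((-1 : k) ^ (n + s) * ((s.factorial : k))⁻¹) • ((Dop ^ s) (mul (n + s) x y))

namespace ConformalAlgebra

variable {k : Type*} [Field k] {C : Type*} [AddCommGroup C] [Module k C]
  (Dop : C →ₗ[k] C) (mul : ℕ → C →ₗ[k] C →ₗ[k] C)

/-- The paper's `C ⟨ω⟩ R`. -/
def omegaMul (R : Submodule k C) : Submodule k C :=
  Submodule.span k {z | ∃ (n : ℕ) (x : C), ∃ r ∈ R, mul n x r = z}

variable {Dop mul}

theorem mul_mem_omegaMul (R : Submodule k C) (n : ℕ) (x : C) {r : C} (hr : r ∈ R) :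
    mul n x r ∈ omegaMul mul R :=
  Submodule.subset_span ⟨n, x, r, hr, rfl⟩

theorem mul_pow_apply_left
    (hC3 : ∀ (n : ℕ) (x y : C), mul n (Dop x) y = -((n : k)) • mul (n - 1) x y)
    (s n : ℕ) (u w : C) :
    mul n ((Dop ^ s) u) w = ((-1 : k) ^ s * (n.descFactorial s : k)) • mul (n - s) u w := by
  induction s generalizing n u with
  | zero => simp
  | succ s ih =>
    rw [pow_succ, Module.End.mul_apply, ih, hC3, Nat.descFactorial_succ, smul_smul,
      Nat.sub_sub]
    congr 1
    push_cast
    ring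

theorem curlyFn_eq_sum {n N : ℕ} {x y : C} (hN : ∀ s ≥ N, mul (n + s) x y = 0) :
    curlyFn Dop mul n x y = ∑ s ∈ range N,
      ((-1 : k) ^ (n + s) * ((s.factorial : k))⁻¹) • ((Dop ^ s) (mul (n + s) x y)) := by
  refine finsum_eq_sum_of_support_subset _ fun s hs => ?_
  by_contra hsN
  simp only [coe_range, Set.mem_Iio, not_lt] at hsN
  simp [hN s hsN] at hs

theorem neg_one_pow_mul_descFactorial_div_factorial [CharZero k] (n s : ℕ) :
    (-1 : k) ^ s * ((s.factorial : k))⁻¹ * ((-1 : k) ^ s * (n.descFactorial s : k))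
      = (n.choose s : k) := by
  have hs : ((s.factorial : k)) ≠ 0 := Nat.cast_ne_zero.2 s.factorial_ne_zero
  rw [Nat.descFactorial_eq_factorial_mul_choose, Nat.cast_mul]
  calc _ = ((-1 : k) ^ s * (-1) ^ s) * (((s.factorial : k))⁻¹ * s.factorial) * n.choose s := by
        ring
    _ = _ := by rw [← mul_pow, neg_one_mul, neg_neg, one_pow, inv_mul_cancel₀ hs, one_mul, one_mul]

theorem mul_curlyFn_zero [CharZero k]
    (hC3 : ∀ (n : ℕ) (x y : C), mul n (Dop x) y = -((n : k)) • mul (n - 1) x y)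
    (hassocR : ∀ (n m : ℕ) (u v w : C),
      mul n u (mul m v w) =
        ∑ s ∈ range (n + 1), ((n.choose s : k)) • mul (m + s) (mul (n - s) u v) w)
    {x y : C} (hloc : ∃ N : ℕ, ∀ n ≥ N, mul n x y = 0) (n : ℕ) (w : C) :
    mul n (curlyFn Dop mul 0 x y) w = mul n x (mul 0 y w) := by
  obtain ⟨N, hN⟩ := hloc
  -- `N + n + 1` covers both the locality bound and the range of `hassocR`.
  rw [curlyFn_eq_sum (N := N + n + 1) fun s hs => hN _ (by omega)]
  simp only [map_sum, LinearMap.sum_apply, map_smul, LinearMap.smul_apply,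
    mul_pow_apply_left hC3, zero_add, smul_smul, neg_one_pow_mul_descFactorial_div_factorial]
  have htrunc : ∑ s ∈ range (N + n + 1), (n.choose s : k) • mul (n - s) (mul s x y) w
      = ∑ s ∈ range (n + 1), (n.choose s : k) • mul (n - s) (mul s x y) w := by
    refine (sum_subset (range_subset_range.2 (by omega)) fun s _ hs => ?_).symm
    rw [Nat.choose_eq_zero_of_lt (by simpa using hs), Nat.cast_zero, zero_smul]
  rw [htrunc, hassocR, ← sum_range_reflect]
  refine sum_congr rfl fun s hs => ?_
  have hs : s ≤ n := Nat.lt_succ_iff.1 (mem_range.1 hs)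
  rw [Nat.add_sub_cancel, Nat.choose_symm hs, Nat.sub_sub_self hs, zero_add]

section Ideal

variable {R : Submodule k C}

theorem map_mem_omegaMul
    (hC2 : ∀ (n : ℕ) (x y : C), mul n x (Dop y) = Dop (mul n x y) + (n : k) • mul (n - 1) x y)
    (hR : ∀ r ∈ R, Dop r ∈ R) {z : C} (hz : z ∈ omegaMul mul R) :
    Dop z ∈ omegaMul mul R := by
  suffices omegaMul mul R ≤ (omegaMul mul R).comap Dop from this hz
  refine Submodule.span_le.2 ?_
  rintro _ ⟨n, x, r, hr, rfl⟩
  have hD : Dop (mul n x r) = mul n x (Dop r) - (n : k) • mul (n - 1) x r := by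
    rw [hC2]; abel
  rw [SetLike.mem_coe, Submodule.mem_comap, hD]
  exact sub_mem (mul_mem_omegaMul R n x (hR r hr))
    (Submodule.smul_mem _ _ (mul_mem_omegaMul R _ x hr))

theorem mul_mem_omegaMul_left
    (hassocR : ∀ (n m : ℕ) (u v w : C),
      mul n u (mul m v w) =
        ∑ s ∈ range (n + 1), ((n.choose s : k)) • mul (m + s) (mul (n - s) u v) w)
    (m : ℕ) (c : C) {z : C} (hz : z ∈ omegaMul mul R) :
    mul m c z ∈ omegaMul mul R := by
  suffices omegaMul mul R ≤ (omegaMul mul R).comap (mul m c) from this hz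
  refine Submodule.span_le.2 ?_
  rintro _ ⟨n, x, r, hr, rfl⟩
  rw [SetLike.mem_coe, Submodule.mem_comap, hassocR]
  exact Submodule.sum_mem _ fun s _ => Submodule.smul_mem _ _ (mul_mem_omegaMul R _ _ hr)

theorem mul_mem_omegaMul_right
    (hassocL : ∀ (n m : ℕ) (u v w : C),
      mul m (mul n u v) w =
        ∑ s ∈ range (n + 1),
          ((-1 : k) ^ s * (n.choose s : k)) • mul (n - s) u (mul (m + s) v w))
    (hR : ∀ (m : ℕ) (c : C), ∀ r ∈ R, mul m r c ∈ R)
    (m : ℕ) (c : C) {z : C} (hz : z ∈ omegaMul mul R) :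
    mul m z c ∈ omegaMul mul R := by
  suffices omegaMul mul R ≤ (omegaMul mul R).comap ((mul m).flip c) from this hz
  refine Submodule.span_le.2 ?_
  rintro _ ⟨n, x, r, hr, rfl⟩
  rw [SetLike.mem_coe, Submodule.mem_comap, LinearMap.flip_apply, hassocL]
  exact Submodule.sum_mem _ fun s _ =>
    Submodule.smul_mem _ _ (mul_mem_omegaMul R _ _ (hR _ c r hr))

end Ideal

theorem map_mem_range_mul_zero
    (hC2 : ∀ (n : ℕ) (x y : C), mul n x (Dop y) = Dop (mul n x y) + (n : k) • mul (n - 1) x y)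
    (a : C) : ∀ r ∈ LinearMap.range (mul 0 a), Dop r ∈ LinearMap.range (mul 0 a) := by
  rintro _ ⟨y, rfl⟩
  exact ⟨Dop y, by simpa using hC2 0 a y⟩

theorem mul_mem_range_mul_zero
    (hassocL : ∀ (n m : ℕ) (u v w : C),
      mul m (mul n u v) w =
        ∑ s ∈ range (n + 1),
          ((-1 : k) ^ s * (n.choose s : k)) • mul (n - s) u (mul (m + s) v w))
    (a : C) (m : ℕ) (c : C) :
    ∀ r ∈ LinearMap.range (mul 0 a), mul m r c ∈ LinearMap.range (mul 0 a) := by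
  rintro _ ⟨y, rfl⟩
  exact ⟨mul m y c, by simpa using (hassocL 0 m a y c).symm⟩

end ConformalAlgebra

open ConformalAlgebra in
theorem simple_ideal_generation_general
    {k : Type*} [Field k] [CharZero k]
    {C : Type*} [AddCommGroup C] [Module k C]
    (Dop : C →ₗ[k] C) (mul : ℕ → C →ₗ[k] C →ₗ[k] C)
    (hloc : ∀ x y : C, ∃ N : ℕ, ∀ n ≥ N, mul n x y = 0)
    (hC2 : ∀ (n : ℕ) (x y : C),
      mul n x (Dop y) = Dop (mul n x y) + (n : k) • mul (n - 1) x y)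
    (hC3 : ∀ (n : ℕ) (x y : C),
      mul n (Dop x) y = -((n : k)) • mul (n - 1) x y)
    (hassocL : ∀ (n m : ℕ) (u v w : C),
      mul m (mul n u v) w =
        ∑ s ∈ range (n + 1),
          ((-1 : k) ^ s * (n.choose s : k)) • mul (n - s) u (mul (m + s) v w))
    (hassocR : ∀ (n m : ℕ) (u v w : C),
      mul n u (mul m v w) =
        ∑ s ∈ range (n + 1), ((n.choose s : k)) • mul (m + s) (mul (n - s) u v) w)
    (hsimple : ∀ I : Submodule k C,
      (∀ x ∈ I, Dop x ∈ I) →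
      (∀ (n : ℕ) (c : C), ∀ x ∈ I, mul n c x ∈ I) →
      (∀ (n : ℕ) (c : C), ∀ x ∈ I, mul n x c ∈ I) →
      I = ⊥ ∨ I = ⊤)
    (a : C)
    (hfix : LinearMap.range ((mul 0 a) ∘ₗ (mul 0 a)) = LinearMap.range (mul 0 a))
    (hne : LinearMap.range (mul 0 a) ≠ ⊥) :
    Submodule.span k
      {z : C | ∃ (n : ℕ) (x y : C), mul n (curlyFn Dop mul 0 x a) (mul 0 a y) = z}
      = ⊤ := by
  set R := LinearMap.range (mul 0 a)
  have hgen : {z : C | ∃ (n : ℕ) (x y : C), mul n (curlyFn Dop mul 0 x a) (mul 0 a y) = z}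
      = {z | ∃ (n : ℕ) (x : C), ∃ r ∈ R, mul n x r = z} := by
    simp only [mul_curlyFn_zero hC3 hassocR (hloc _ a), R, ← hfix, LinearMap.mem_range,
      LinearMap.comp_apply, exists_exists_eq_and]
  have hne_bot : omegaMul mul R ≠ ⊥ := by
    refine fun h => hne ?_
    rw [← hfix, Submodule.eq_bot_iff]
    rintro _ ⟨y, rfl⟩
    exact (Submodule.eq_bot_iff _).1 h _ (mul_mem_omegaMul R 0 a ⟨y, rfl⟩)
  rw [hgen]
  exact (hsimple _ (fun _ => map_mem_omegaMul hC2 (map_mem_range_mul_zero hC2 a))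
    (fun m c _ => mul_mem_omegaMul_left hassocR m c)
    (fun m c _ => mul_mem_omegaMul_right hassocL (mul_mem_range_mul_zero hassocL a) m c)
    ).resolve_left hne_bot

theorem simple_ideal_generation
    {k : Type*} [Field k] [CharZero k]
    {C : Type*} [AddCommGroup C] [Module k C]
    (Dop : C →ₗ[k] C) (mul : ℕ → C →ₗ[k] C →ₗ[k] C)
    (hloc : ∀ x y : C, ∃ N : ℕ, ∀ n ≥ N, mul n x y = 0)
    (hC2 : ∀ (n : ℕ) (x y : C),
      mul n x (Dop y) = Dop (mul n x y) + (n : k) • mul (n - 1) x y)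
    (hC3 : ∀ (n : ℕ) (x y : C),
      mul n (Dop x) y = -((n : k)) • mul (n - 1) x y)
    (hassocL : ∀ (n m : ℕ) (u v w : C),
      mul m (mul n u v) w =
        ∑ s ∈ range (n + 1),
          ((-1 : k) ^ s * (n.choose s : k)) • mul (n - s) u (mul (m + s) v w))
    (hassocR : ∀ (n m : ℕ) (u v w : C),
      mul n u (mul m v w) =
        ∑ s ∈ range (n + 1), ((n.choose s : k)) • mul (m + s) (mul (n - s) u v) w)
    (hCC : ∃ (n : ℕ) (x y : C), mul n x y ≠ 0)
    (hsimple : ∀ I : Submodule k C,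
      (∀ x ∈ I, Dop x ∈ I) →
      (∀ (n : ℕ) (c : C), ∀ x ∈ I, mul n c x ∈ I) →
      (∀ (n : ℕ) (c : C), ∀ x ∈ I, mul n x c ∈ I) →
      I = ⊥ ∨ I = ⊤)
    (a : C)
    (hfix : LinearMap.range ((mul 0 a) ∘ₗ (mul 0 a)) = LinearMap.range (mul 0 a))
    (hne : LinearMap.range (mul 0 a) ≠ ⊥) :
    Submodule.span k
      {z : C | ∃ (n : ℕ) (x y : C), mul n (curlyFn Dop mul 0 x a) (mul 0 a y) = z}
      = ⊤ :=
  simple_ideal_generation_general Dop mul hloc hC2 hC3 hassocL hassocR hsimple a hfix hne
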